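/- For a partition Γ* of {1,...,n} with k blocks, the sum of unCD distances from the complex extension Γ_{l'} (adding n+1 to block S_{l'}) to all other extensions of Γ* equals (k−1)·|S_{l'}| + n, which is at least n. -/

import Mathlib

open Finset

/-- `i` and `j` lie in the same block of the partition `Γ`. -/
def samePart {n : ℕ} (Γ : Finpartition (univ : Finset (Fin n))) (i j : Fin n) : Prop :=
  ∃ S ∈ Γ.parts, i ∈ S ∧ j ∈ S

open scoped Classical in
/-- Unnormalized Cluster Difference between two partitions of `{1,…,n}`. -/
noncomputable def unCD {n : ℕ} (Γ₁ Γ₂ : Finpartition (univ : Finset (Fin n))) : ℕ :=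
  ((univ : Finset (Fin n × Fin n)).filter
    (fun p => p.1 < p.2 ∧ ¬ (samePart Γ₁ p.1 p.2 ↔ samePart Γ₂ p.1 p.2))).card

/-- `Γ` is the simple extension of `Γs`: blocks of `Γs` (reindexed) plus the singleton `{n+1}`. -/
def IsSimpleExt {n : ℕ} (Γs : Finpartition (univ : Finset (Fin n)))
    (Γ : Finpartition (univ : Finset (Fin (n + 1)))) : Prop :=
  Γ.parts = insert {Fin.last n} (Γs.parts.image (fun S => S.image Fin.castSucc))

/-- `Γ` is the complex extension of `Γs` along its block `S`:
the element `n+1` is added to the block `S`. -/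
def IsComplexExt {n : ℕ} (Γs : Finpartition (univ : Finset (Fin n))) (S : Finset (Fin n))
    (Γ : Finpartition (univ : Finset (Fin (n + 1)))) : Prop :=
  S ∈ Γs.parts ∧
    Γ.parts = insert (insert (Fin.last n) (S.image Fin.castSucc))
      ((Γs.parts.erase S).image (fun T => T.image Fin.castSucc))

/-- `Γ` is an extension of `Γs` (equivalently, `Γs` is the reduct of `Γ`). -/
def IsExt {n : ℕ} (Γs : Finpartition (univ : Finset (Fin n)))
    (Γ : Finpartition (univ : Finset (Fin (n + 1)))) : Prop :=
  IsSimpleExt Γs Γ ∨ ∃ S, IsComplexExt Γs S Γ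

noncomputable instance {n : ℕ} : Fintype (Finpartition (univ : Finset (Fin n))) :=
  Fintype.ofInjective Finpartition.parts (fun _ _ h => Finpartition.ext h)

noncomputable instance {n : ℕ} : DecidableEq (Finpartition (univ : Finset (Fin n))) :=
  Classical.decEq _

/-!
Both kinds of extension have the shape `extendParts A P`: the old blocks `P`, lifted to
`Fin (n + 1)`, together with the block `A ∪ {n+1}` (with `A = ∅` for the simple extension).
Two such partitions agree on every pair of old elements, so only the pairs `(a, n+1)` count
towards their `unCD`, and these are exactly the `a` in the symmetric difference `A ∆ B`.
For two complex extensions along different blocks `S`, `T` this is `|S| + |T|`, against the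
simple extension it is `|S|`; summing over the blocks gives `(k - 1)|S'| + n`.
-/

open scoped symmDiff

section

variable {n : ℕ}

def extendParts (A : Finset (Fin n)) (P : Finset (Finset (Fin n))) :
    Finset (Finset (Fin (n + 1))) :=
  insert (insert (Fin.last n) (A.image Fin.castSucc)) (P.image (·.image Fin.castSucc))

lemma samePart_castSucc_of_parts_eq_extendParts {Γ : Finpartition (univ : Finset (Fin (n + 1)))}
    {A : Finset (Fin n)} {P : Finset (Finset (Fin n))} (h : Γ.parts = extendParts A P)
    (a b : Fin n) :
    samePart Γ a.castSucc b.castSucc ↔ (a ∈ A ∧ b ∈ A) ∨ ∃ T ∈ P, a ∈ T ∧ b ∈ T := by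
  simp [samePart, h, extendParts, Fin.castSucc_ne_last]

lemma samePart_last_of_parts_eq_extendParts {Γ : Finpartition (univ : Finset (Fin (n + 1)))}
    {A : Finset (Fin n)} {P : Finset (Finset (Fin n))} (h : Γ.parts = extendParts A P)
    (a : Fin n) :
    samePart Γ a.castSucc (Fin.last n) ↔ a ∈ A := by
  simp [samePart, h, extendParts, Fin.castSucc_ne_last]

lemma unCD_eq_card_symmDiff {Γ₁ Γ₂ : Finpartition (univ : Finset (Fin (n + 1)))}
    {A B : Finset (Fin n)}
    (hcast : ∀ a b : Fin n,
      samePart Γ₁ a.castSucc b.castSucc ↔ samePart Γ₂ a.castSucc b.castSucc)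
    (h₁ : ∀ a : Fin n, samePart Γ₁ a.castSucc (Fin.last n) ↔ a ∈ A)
    (h₂ : ∀ a : Fin n, samePart Γ₂ a.castSucc (Fin.last n) ↔ a ∈ B) :
    unCD Γ₁ Γ₂ = #(A ∆ B) := by
  have hinj : Function.Injective fun a : Fin n => (a.castSucc, Fin.last n) :=
    fun a b h => by simpa using h
  rw [unCD, ← card_image_of_injective _ hinj]
  congr 1
  ext ⟨x, y⟩
  induction y using Fin.lastCases <;> induction x using Fin.lastCases <;>
    simp [hcast, h₁, h₂, mem_symmDiff, Fin.castSucc_lt_last, Fin.castSucc_ne_last, eq_comm,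
      (Fin.castSucc_lt_last _).not_gt]
  tauto

lemma IsSimpleExt.parts_eq_extendParts {Γs : Finpartition (univ : Finset (Fin n))}
    {Γ : Finpartition (univ : Finset (Fin (n + 1)))} (h : IsSimpleExt Γs Γ) :
    Γ.parts = extendParts ∅ Γs.parts := by
  rw [h, extendParts, image_empty, insert_empty]

lemma IsSimpleExt.samePart_castSucc {Γs : Finpartition (univ : Finset (Fin n))}
    {Γ : Finpartition (univ : Finset (Fin (n + 1)))} (h : IsSimpleExt Γs Γ) (a b : Fin n) :
    samePart Γ a.castSucc b.castSucc ↔ samePart Γs a b := by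
  rw [samePart_castSucc_of_parts_eq_extendParts h.parts_eq_extendParts]
  simp [samePart]

lemma IsComplexExt.samePart_castSucc {Γs : Finpartition (univ : Finset (Fin n))}
    {S : Finset (Fin n)} {Γ : Finpartition (univ : Finset (Fin (n + 1)))}
    (h : IsComplexExt Γs S Γ) (a b : Fin n) :
    samePart Γ a.castSucc b.castSucc ↔ samePart Γs a b := by
  rw [samePart_castSucc_of_parts_eq_extendParts h.2, samePart]
  constructor
  · rintro (hab | ⟨T, hT, hab⟩)
    exacts [⟨S, h.1, hab⟩, ⟨T, mem_of_mem_erase hT, hab⟩]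
  · rintro ⟨T, hT, hab⟩
    by_cases hTS : T = S
    · exact .inl (hTS ▸ hab)
    · exact .inr ⟨T, mem_erase.2 ⟨hTS, hT⟩, hab⟩

lemma IsComplexExt.samePart_last {Γs : Finpartition (univ : Finset (Fin n))}
    {S : Finset (Fin n)} {Γ : Finpartition (univ : Finset (Fin (n + 1)))}
    (h : IsComplexExt Γs S Γ) (a : Fin n) :
    samePart Γ a.castSucc (Fin.last n) ↔ a ∈ S :=
  samePart_last_of_parts_eq_extendParts h.2 a

lemma IsComplexExt.unCD_eq_card_of_isSimpleExt {Γs : Finpartition (univ : Finset (Fin n))}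
    {S : Finset (Fin n)} {Γ Γ₀ : Finpartition (univ : Finset (Fin (n + 1)))}
    (h : IsComplexExt Γs S Γ) (h₀ : IsSimpleExt Γs Γ₀) :
    unCD Γ Γ₀ = #S := by
  rw [unCD_eq_card_symmDiff
    (fun a b => (h.samePart_castSucc a b).trans (h₀.samePart_castSucc a b).symm)
    h.samePart_last (samePart_last_of_parts_eq_extendParts h₀.parts_eq_extendParts),
    ← bot_eq_empty, symmDiff_bot]

lemma IsComplexExt.unCD_eq_card_add_card {Γs : Finpartition (univ : Finset (Fin n))}
    {S T : Finset (Fin n)} {Γ Δ : Finpartition (univ : Finset (Fin (n + 1)))}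
    (hΓ : IsComplexExt Γs S Γ) (hΔ : IsComplexExt Γs T Δ) (hST : S ≠ T) :
    unCD Γ Δ = #S + #T := by
  have hdisj : Disjoint S T := Γs.disjoint hΓ.1 hΔ.1 hST
  rw [unCD_eq_card_symmDiff
    (fun a b => (hΓ.samePart_castSucc a b).trans (hΔ.samePart_castSucc a b).symm)
    hΓ.samePart_last hΔ.samePart_last,
    hdisj.symmDiff_eq_sup, sup_eq_union, card_union_of_disjoint hdisj]

end

lemma Finpartition.card_add_sum_card_parts_erase {α : Type*} [DecidableEq α] {s : Finset α}
    (P : Finpartition s) {S : Finset α} (hS : S ∈ P.parts) :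
    #S + ∑ T ∈ P.parts.erase S, #T = #s := by
  rw [add_sum_erase _ _ hS, P.sum_card_parts]

theorem stmt8 {n : ℕ} {Γs : Finpartition (univ : Finset (Fin n))}
    {Γ₀ : Finpartition (univ : Finset (Fin (n + 1)))} (h₀ : IsSimpleExt Γs Γ₀)
    (E : Finset (Fin n) → Finpartition (univ : Finset (Fin (n + 1))))
    (hE : ∀ S ∈ Γs.parts, IsComplexExt Γs S (E S))
    {S' : Finset (Fin n)} (hS' : S' ∈ Γs.parts) :
    unCD (E S') Γ₀ + ∑ S ∈ Γs.parts.erase S', unCD (E S') (E S)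
        = (Γs.parts.card - 1) * S'.card + n ∧
      n ≤ (Γs.parts.card - 1) * S'.card + n := by
  have hcomplex : ∀ S ∈ Γs.parts.erase S', unCD (E S') (E S) = #S' + #S := fun S hS =>
    (hE S' hS').unCD_eq_card_add_card (hE S (mem_of_mem_erase hS)) (ne_of_mem_erase hS).symm
  have hsum : #S' + ∑ S ∈ Γs.parts.erase S', #S = n := by
    simpa using Γs.card_add_sum_card_parts_erase hS'
  refine ⟨?_, Nat.le_add_left n _⟩
  rw [(hE S' hS').unCD_eq_card_of_isSimpleExt h₀, sum_congr rfl hcomplex, sum_add_distrib,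
    sum_const, card_erase_of_mem hS', smul_eq_mul]
  omega
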